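/- The ABC index of the graph obtained by joining the empty graph on β vertices with K_{n-β} (for 1 ≤ β ≤ n-1) equals β(n-β)·sqrt((2n-β-3)/((n-β)(n-1))) + ((n-β)(n-β-1)/2)·sqrt((2n-4)/(n-1)²). -/

import Mathlib

/-- The degree of a vertex. -/
noncomputable def deg {V : Type*} (G : SimpleGraph V) (v : V) : ℕ :=
  Nat.card {w | G.Adj v w}

open scoped Classical in
/-- The atom-bond connectivity index:
`ABC(G) = ∑_{uv ∈ E(G)} sqrt((d(u)+d(v)-2)/(d(u)d(v)))`,
computed as half the sum over ordered adjacent pairs. -/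
noncomputable def ABC {V : Type*} [Fintype V] (G : SimpleGraph V) : ℝ :=
  (∑ u : V, ∑ v : V, if G.Adj u v then
    Real.sqrt (((deg G u : ℝ) + (deg G v : ℝ) - 2) / ((deg G u : ℝ) * (deg G v : ℝ)))
  else 0) / 2

/-- The join of the empty graph on `β` vertices with `K_{n-β}`:
the first `β` vertices are independent, the rest form a clique, with all cross edges. -/
def splitGraph (n β : ℕ) : SimpleGraph (Fin n) where
  Adj u v := u ≠ v ∧ (β ≤ u.val ∨ β ≤ v.val)
  symm := by constructor; intro u v h; exact ⟨h.1.symm, h.2.symm⟩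
  loopless := by constructor; intro u h; exact h.1 rfl

/-! Write `n = β + m` and split `Fin (β + m)` into the independent vertices `Fin.castAdd m i`
and the clique vertices `Fin.natAdd β j`. The former have degree `m`, the latter `β + m - 1`,
so each of the `β m` cross edges contributes `√((m + (β + m - 1) - 2) / (m (β + m - 1)))` and
each of the `m (m - 1) / 2` clique edges contributes `√(2 (β + m - 2) / (β + m - 1)²)`. -/

open Finset

lemma Fintype.sum_ite_ne_add_self {ι M : Type*} [Fintype ι] [DecidableEq ι] [AddCommMonoid M]
    (i : ι) (c : M) : (∑ j, if i ≠ j then c else 0) + c = Fintype.card ι • c := by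
  conv_lhs => rw [← sum_ite_eq_of_mem univ i (fun _ => c) (mem_univ i), ← sum_add_distrib]
  rw [← card_univ, ← sum_const]
  refine Finset.sum_congr rfl fun j _ => ?_
  by_cases h : i = j <;> simp [h]

lemma deg_eq_sum_ite {V : Type*} [Fintype V] (G : SimpleGraph V) [DecidableRel G.Adj] (v : V) :
    deg G v = ∑ w, if G.Adj v w then 1 else 0 := by
  rw [← card_filter, ← G.neighborFinset_eq_filter, G.card_neighborFinset_eq_degree,
    ← G.card_neighborSet_eq_degree, ← Nat.card_eq_fintype_card]
  rfl

noncomputable def abcWeight (a b : ℝ) : ℝ := √((a + b - 2) / (a * b))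

lemma abcWeight_comm (a b : ℝ) : abcWeight a b = abcWeight b a := by
  rw [abcWeight, abcWeight, add_comm a, mul_comm a]

open scoped Classical in
lemma ABC_eq_sum_abcWeight {V : Type*} [Fintype V] (G : SimpleGraph V) :
    ABC G = (∑ u, ∑ v, if G.Adj u v then abcWeight (deg G u) (deg G v) else 0) / 2 := rfl

namespace splitGraph

variable {β m : ℕ}

@[simp] lemma not_adj_castAdd_castAdd (i i' : Fin β) :
    ¬ (splitGraph (β + m) β).Adj (Fin.castAdd m i) (Fin.castAdd m i') := by
  simp [splitGraph]

@[simp] lemma adj_castAdd_natAdd (i : Fin β) (j : Fin m) :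
    (splitGraph (β + m) β).Adj (Fin.castAdd m i) (Fin.natAdd β j) :=
  ⟨Fin.ne_of_lt (i.isLt.trans_le (Nat.le_add_right β j)), Or.inr (Nat.le_add_right β j)⟩

@[simp] lemma adj_natAdd_castAdd (i : Fin β) (j : Fin m) :
    (splitGraph (β + m) β).Adj (Fin.natAdd β j) (Fin.castAdd m i) :=
  (adj_castAdd_natAdd i j).symm

@[simp] lemma adj_natAdd_natAdd (j j' : Fin m) :
    (splitGraph (β + m) β).Adj (Fin.natAdd β j) (Fin.natAdd β j') ↔ j ≠ j' := by
  simp [splitGraph]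

lemma deg_castAdd (i : Fin β) : deg (splitGraph (β + m) β) (Fin.castAdd m i) = m := by
  classical
  rw [deg_eq_sum_ite, Fin.sum_univ_add]
  simp

lemma deg_natAdd (j : Fin m) :
    (deg (splitGraph (β + m) β) (Fin.natAdd β j) : ℝ) = β + m - 1 := by
  classical
  have h : deg (splitGraph (β + m) β) (Fin.natAdd β j) + 1 = β + m := by
    rw [deg_eq_sum_ite, Fin.sum_univ_add, add_assoc]
    simp only [adj_natAdd_castAdd, adj_natAdd_natAdd, if_true, sum_const, card_univ,
      Fintype.card_fin, smul_eq_mul, mul_one, Fintype.sum_ite_ne_add_self]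
  rw [eq_sub_iff_add_eq]
  exact_mod_cast h

end splitGraph

open splitGraph in
theorem ABC_splitGraph_add (β m : ℕ) :
    ABC (splitGraph (β + m) β) = β * m * abcWeight m (β + m - 1) +
      m * (m - 1) / 2 * abcWeight (β + m - 1) (β + m - 1) := by
  classical
  rw [ABC_eq_sum_abcWeight, Fin.sum_univ_add]
  simp only [Fin.sum_univ_add, not_adj_castAdd_castAdd, adj_castAdd_natAdd, adj_natAdd_castAdd,
    adj_natAdd_natAdd, if_true, if_false, deg_castAdd, deg_natAdd, sum_const_zero, sum_const,
    card_univ, Fintype.card_fin, nsmul_eq_mul, abcWeight_comm (β + m - 1 : ℝ) m,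
    fun j c => eq_sub_of_add_eq (Fintype.sum_ite_ne_add_self (M := ℝ) j c)]
  ring

theorem abc_splitGraph_general {n β : ℕ} (hβn : β ≤ n - 1) :
    ABC (splitGraph n β) = (β : ℝ) * ((n : ℝ) - β) *
        Real.sqrt ((2 * (n : ℝ) - β - 3) / (((n : ℝ) - β) * ((n : ℝ) - 1))) +
      (((n : ℝ) - β) * ((n : ℝ) - β - 1) / 2) *
        Real.sqrt ((2 * (n : ℝ) - 4) / (((n : ℝ) - 1) ^ 2)) := by
  obtain ⟨m, rfl⟩ : ∃ m, n = β + m := ⟨n - β, by omega⟩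
  rw [ABC_splitGraph_add, abcWeight, abcWeight]
  push_cast
  ring_nf

theorem abc_splitGraph {n β : ℕ} (hβ1 : 1 ≤ β) (hβn : β ≤ n - 1) :
    ABC (splitGraph n β) = (β : ℝ) * ((n : ℝ) - β) *
        Real.sqrt ((2 * (n : ℝ) - β - 3) / (((n : ℝ) - β) * ((n : ℝ) - 1))) +
      (((n : ℝ) - β) * ((n : ℝ) - β - 1) / 2) *
        Real.sqrt ((2 * (n : ℝ) - 4) / (((n : ℝ) - 1) ^ 2)) :=
  abc_splitGraph_general hβn
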